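/- arXiv:0906.0546 — 2 statements merged into one kernel-verified Lean document; each statement's English description precedes it below -/
import Mathlib

section
/- Let (J1, J2, J3) be a para-hypercomplex structure on a real vector space V, V⁺ the +1-eigenspace of J2, and h a nondegenerate skew-symmetric bilinear form on V⁺. Extend h to V by declaring h(X,Y) = 0 whenever X or Y lies in V⁻, and define g(X,Y) = h(X, J1Y) + h(Y, J1X). Then g is a nondegenerate symmetric bilinear form on V satisfying g(J1X,J1Y) = g(X,Y) and g(J2X,J2Y) = g(J3X,J3Y) = -g(X,Y). -/
/-! Since `h` kills `V⁻ = ker (J₂ + 1)` and `x - J₂ x ∈ V⁻`, `h` is invariant under `J₂` in each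
argument; as `x + J₂ x ∈ V⁺`, skew-symmetry on `V⁺` then spreads to all of `V`. With `h` skew,
`J₁² = -1` gives the `J₁`-invariance of `g`, and `J₁J₂ = -J₂J₁` its `J₂`-anti-invariance. For
nondegeneracy, test `X` against `V⁺` and against `J₁ V⁺ ⊆ V⁻`: both `h (J₁ X) ·` and `h X ·` vanish
on `V⁺`, so `J₁ X` and `X` lie in `V⁻`; since `J₁` swaps `V⁻` and `V⁺`, `X ∈ V⁺ ∩ V⁻ = 0`. -/

section

open Function
open LinearMap (ker mem_ker)

variable {K V : Type*} [Field K] [AddCommGroup V] [Module K V]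

section Involution

variable {J : V →ₗ[K] V}

lemma add_apply_mem_ker_sub_id (hJ : Involutive J) (x : V) : x + J x ∈ ker (J - LinearMap.id) := by
  simp [hJ x, add_comm]

lemma sub_apply_mem_ker_add_id (hJ : Involutive J) (x : V) : x - J x ∈ ker (J + LinearMap.id) := by
  simp [hJ x]

lemma eq_zero_of_mem_ker_sub_id_of_mem_ker_add_id [NeZero (2 : K)] {x : V}
    (hp : x ∈ ker (J - LinearMap.id)) (hm : x ∈ ker (J + LinearMap.id)) : x = 0 := by
  rw [mem_ker, LinearMap.sub_apply, LinearMap.id_apply, sub_eq_zero] at hp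
  rw [mem_ker, LinearMap.add_apply, LinearMap.id_apply, hp, ← two_smul K] at hm
  exact (smul_eq_zero.1 hm).resolve_left two_ne_zero

end Involution

section Anticommuting

variable {J₁ J₂ : V →ₗ[K] V}

lemma map_mem_ker_add_id_of_anticomm (hanti : ∀ x, J₂ (J₁ x) = -J₁ (J₂ x)) {x : V}
    (hx : x ∈ ker (J₂ - LinearMap.id)) : J₁ x ∈ ker (J₂ + LinearMap.id) := by
  rw [mem_ker, LinearMap.sub_apply, LinearMap.id_apply, sub_eq_zero] at hx
  simp [hanti, hx]

lemma mem_ker_sub_id_of_map_mem_ker_add_id (hanti : ∀ x, J₂ (J₁ x) = -J₁ (J₂ x))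
    (hJ₁ : Injective J₁) {x : V} (hx : J₁ x ∈ ker (J₂ + LinearMap.id)) :
    x ∈ ker (J₂ - LinearMap.id) := by
  rw [mem_ker, LinearMap.add_apply, LinearMap.id_apply, hanti, neg_add_eq_zero] at hx
  rw [mem_ker, LinearMap.sub_apply, LinearMap.id_apply, hJ₁ hx, sub_self]

end Anticommuting

section VanishingOnKerAddId

variable {J : V →ₗ[K] V} {h : V →ₗ[K] V →ₗ[K] K}

lemma apply_map_left_of_involutive (hJ : Involutive J)
    (hzero : ∀ x y, x ∈ ker (J + LinearMap.id) ∨ y ∈ ker (J + LinearMap.id) → h x y = 0) (x y : V) :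
    h (J x) y = h x y := by
  have := hzero _ y (.inl (sub_apply_mem_ker_add_id hJ x))
  rwa [map_sub, LinearMap.sub_apply, sub_eq_zero, eq_comm] at this

lemma apply_map_right_of_involutive (hJ : Involutive J)
    (hzero : ∀ x y, x ∈ ker (J + LinearMap.id) ∨ y ∈ ker (J + LinearMap.id) → h x y = 0) (x y : V) :
    h x (J y) = h x y := by
  have := hzero x _ (.inr (sub_apply_mem_ker_add_id hJ y))
  rwa [map_sub, sub_eq_zero, eq_comm] at this

lemma apply_add_map_add_map (hJ : Involutive J)
    (hzero : ∀ x y, x ∈ ker (J + LinearMap.id) ∨ y ∈ ker (J + LinearMap.id) → h x y = 0) (x y : V) :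
    h (x + J x) (y + J y) = 4 * h x y := by
  simp only [map_add, LinearMap.add_apply, apply_map_left_of_involutive hJ hzero,
    apply_map_right_of_involutive hJ hzero]
  ring

lemma skew_of_skew_on_ker_sub_id [NeZero (2 : K)] (hJ : Involutive J)
    (hzero : ∀ x y, x ∈ ker (J + LinearMap.id) ∨ y ∈ ker (J + LinearMap.id) → h x y = 0)
    (hskew : ∀ x ∈ ker (J - LinearMap.id), ∀ y ∈ ker (J - LinearMap.id), h x y = -h y x) (x y : V) :
    h x y = -h y x := by
  have := hskew _ (add_apply_mem_ker_sub_id hJ x) _ (add_apply_mem_ker_sub_id hJ y)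
  rw [apply_add_map_add_map hJ hzero, apply_add_map_add_map hJ hzero, ← mul_neg] at this
  exact mul_left_cancel₀ (mul_ne_zero two_ne_zero two_ne_zero) (by linear_combination this)

lemma mem_ker_add_id_of_forall_apply_eq_zero [NeZero (2 : K)] (hJ : Involutive J)
    (hzero : ∀ x y, x ∈ ker (J + LinearMap.id) ∨ y ∈ ker (J + LinearMap.id) → h x y = 0)
    (hnd : ∀ x ∈ ker (J - LinearMap.id), (∀ y ∈ ker (J - LinearMap.id), h x y = 0) → x = 0) {x : V}
    (hx : ∀ y ∈ ker (J - LinearMap.id), h x y = 0) : x ∈ ker (J + LinearMap.id) := by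
  have := hnd _ (add_apply_mem_ker_sub_id hJ x) fun y hy => by
    rw [map_add, LinearMap.add_apply, apply_map_left_of_involutive hJ hzero, hx y hy, add_zero]
  rwa [mem_ker, LinearMap.add_apply, LinearMap.id_apply, add_comm]

end VanishingOnKerAddId

def symmetrizedCompl₂ (h : V →ₗ[K] V →ₗ[K] K) (J : V →ₗ[K] V) : V →ₗ[K] V →ₗ[K] K :=
  h.compl₂ J + (h.compl₂ J).flip

section SymmetrizedCompl₂

variable {h : V →ₗ[K] V →ₗ[K] K}

@[simp]
lemma symmetrizedCompl₂_apply (J : V →ₗ[K] V) (x y : V) :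
    symmetrizedCompl₂ h J x y = h x (J y) + h y (J x) :=
  rfl

lemma symmetrizedCompl₂_comm (J : V →ₗ[K] V) (x y : V) :
    symmetrizedCompl₂ h J x y = symmetrizedCompl₂ h J y x :=
  add_comm _ _

lemma symmetrizedCompl₂_map_map_of_sq_eq_neg {J : V →ₗ[K] V} (hskew : ∀ x y, h x y = -h y x)
    (hJ : ∀ x, J (J x) = -x) (x y : V) :
    symmetrizedCompl₂ h J (J x) (J y) = symmetrizedCompl₂ h J x y := by
  simp only [symmetrizedCompl₂_apply, hJ, map_neg, hskew (J x) y, hskew (J y) x]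
  ring

lemma symmetrizedCompl₂_map_map_of_anticomm {J₁ J₂ : V →ₗ[K] V}
    (hleft : ∀ x y, h (J₂ x) y = h x y) (hright : ∀ x y, h x (J₂ y) = h x y)
    (hanti : ∀ x, J₂ (J₁ x) = -J₁ (J₂ x)) (x y : V) :
    symmetrizedCompl₂ h J₁ (J₂ x) (J₂ y) = -symmetrizedCompl₂ h J₁ x y := by
  have hanti' (x : V) : J₁ (J₂ x) = -J₂ (J₁ x) := by rw [hanti, neg_neg]
  simp only [symmetrizedCompl₂_apply, hanti', map_neg, hleft, hright]
  ring

lemma symmetrizedCompl₂_separatingLeft [NeZero (2 : K)] {J₁ J₂ : V →ₗ[K] V}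
    (hJ₁ : ∀ x, J₁ (J₁ x) = -x) (hJ₂ : Involutive J₂) (hanti : ∀ x, J₂ (J₁ x) = -J₁ (J₂ x))
    (hzero : ∀ x y, x ∈ ker (J₂ + LinearMap.id) ∨ y ∈ ker (J₂ + LinearMap.id) → h x y = 0)
    (hskew : ∀ x y, h x y = -h y x)
    (hnd : ∀ x ∈ ker (J₂ - LinearMap.id), (∀ y ∈ ker (J₂ - LinearMap.id), h x y = 0) → x = 0) :
    (symmetrizedCompl₂ h J₁).SeparatingLeft := by
  intro x hx
  have hJ₁_inj : Injective J₁ := fun a b hab => neg_injective <| by rw [← hJ₁ a, ← hJ₁ b, hab]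
  have hx_minus : x ∈ ker (J₂ + LinearMap.id) :=
    mem_ker_add_id_of_forall_apply_eq_zero hJ₂ hzero hnd fun y hy => by
      have := hx (J₁ y)
      rwa [symmetrizedCompl₂_apply, hJ₁, map_neg,
        hzero (J₁ y) _ (.inl (map_mem_ker_add_id_of_anticomm hanti hy)), add_zero,
        neg_eq_zero] at this
  have hJ₁x_minus : J₁ x ∈ ker (J₂ + LinearMap.id) :=
    mem_ker_add_id_of_forall_apply_eq_zero hJ₂ hzero hnd fun y hy => by
      have := hx y
      rwa [symmetrizedCompl₂_apply, hzero x _ (.inr (map_mem_ker_add_id_of_anticomm hanti hy)),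
        zero_add, hskew, neg_eq_zero] at this
  exact eq_zero_of_mem_ker_sub_id_of_mem_ker_add_id
    (mem_ker_sub_id_of_map_mem_ker_add_id hanti hJ₁_inj hJ₁x_minus) hx_minus

end SymmetrizedCompl₂

end

theorem stmt_3_general (V : Type*) [AddCommGroup V] [Module ℝ V]
    (J1 J2 J3 : V →ₗ[ℝ] V)
    (hJ1 : J1 ∘ₗ J1 = -LinearMap.id)
    (hJ2 : J2 ∘ₗ J2 = LinearMap.id)
    (h12 : J1 ∘ₗ J2 = J3)
    (h21 : J2 ∘ₗ J1 = -J3)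
    (Vp : Submodule ℝ V) (Vm : Submodule ℝ V)
    (hVp : Vp = LinearMap.ker (J2 - LinearMap.id))
    (hVm : Vm = LinearMap.ker (J2 + LinearMap.id))
    (h : V →ₗ[ℝ] V →ₗ[ℝ] ℝ)
    -- h is skew-symmetric on V⁺
    (hskew : ∀ x ∈ Vp, ∀ y ∈ Vp, h x y = -h y x)
    -- h is nondegenerate on V⁺
    (hnd : ∀ x ∈ Vp, (∀ y ∈ Vp, h x y = 0) → x = 0)
    -- h vanishes whenever one argument lies in V⁻
    (hzero : ∀ x y, x ∈ Vm ∨ y ∈ Vm → h x y = 0)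
    (g : V → V → ℝ)
    (hg : ∀ X Y, g X Y = h X (J1 Y) + h Y (J1 X)) :
    (∀ X Y, g X Y = g Y X) ∧
    (∀ X, (∀ Y, g X Y = 0) → X = 0) ∧
    (∀ X Y, g (J1 X) (J1 Y) = g X Y) ∧
    (∀ X Y, g (J2 X) (J2 Y) = -g X Y) ∧
    (∀ X Y, g (J3 X) (J3 Y) = -g X Y) := by
  subst hVp hVm
  obtain rfl : g = fun X Y => symmetrizedCompl₂ h J1 X Y := funext₂ hg
  have hJ1' (x : V) : J1 (J1 x) = -x := congr($hJ1 x)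
  have hJ2' : Function.Involutive J2 := fun x => congr($hJ2 x)
  have hJ3_eq (x : V) : J3 x = J1 (J2 x) := congr($h12.symm x)
  have hanti (x : V) : J2 (J1 x) = -J1 (J2 x) := by rw [← hJ3_eq]; exact congr($h21 x)
  have hskew' := skew_of_skew_on_ker_sub_id hJ2' hzero hskew
  have hJ2_map_map := symmetrizedCompl₂_map_map_of_anticomm
    (apply_map_left_of_involutive hJ2' hzero) (apply_map_right_of_involutive hJ2' hzero) hanti
  refine ⟨symmetrizedCompl₂_comm J1,
    symmetrizedCompl₂_separatingLeft hJ1' hJ2' hanti hzero hskew' hnd,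
    symmetrizedCompl₂_map_map_of_sq_eq_neg hskew' hJ1', hJ2_map_map, fun X Y => ?_⟩
  simp only [hJ3_eq, symmetrizedCompl₂_map_map_of_sq_eq_neg hskew' hJ1', hJ2_map_map]

theorem stmt_3 (V : Type*) [AddCommGroup V] [Module ℝ V]
    (J1 J2 J3 : V →ₗ[ℝ] V)
    (hJ1 : J1 ∘ₗ J1 = -LinearMap.id)
    (hJ2 : J2 ∘ₗ J2 = LinearMap.id)
    (hJ3 : J3 ∘ₗ J3 = LinearMap.id)
    (h12 : J1 ∘ₗ J2 = J3)
    (h21 : J2 ∘ₗ J1 = -J3)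
    (Vp : Submodule ℝ V) (Vm : Submodule ℝ V)
    (hVp : Vp = LinearMap.ker (J2 - LinearMap.id))
    (hVm : Vm = LinearMap.ker (J2 + LinearMap.id))
    (h : V →ₗ[ℝ] V →ₗ[ℝ] ℝ)
    -- h is skew-symmetric on V⁺
    (hskew : ∀ x ∈ Vp, ∀ y ∈ Vp, h x y = -h y x)
    -- h is nondegenerate on V⁺
    (hnd : ∀ x ∈ Vp, (∀ y ∈ Vp, h x y = 0) → x = 0)
    -- h vanishes whenever one argument lies in V⁻
    (hzero : ∀ x y, x ∈ Vm ∨ y ∈ Vm → h x y = 0)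
    (g : V → V → ℝ)
    (hg : ∀ X Y, g X Y = h X (J1 Y) + h Y (J1 X)) :
    (∀ X Y, g X Y = g Y X) ∧
    (∀ X, (∀ Y, g X Y = 0) → X = 0) ∧
    (∀ X Y, g (J1 X) (J1 Y) = g X Y) ∧
    (∀ X Y, g (J2 X) (J2 Y) = -g X Y) ∧
    (∀ X Y, g (J3 X) (J3 Y) = -g X Y) :=
  stmt_3_general V J1 J2 J3 hJ1 hJ2 h12 h21 Vp Vm hVp hVm h hskew hnd hzero g hg
end

section
/- Let (J1, J2, J3) be a para-hypercomplex structure on a 4-dimensional real vector space V and let g, h be two compatible metrics. Then there exists a nonzero real number λ such that g = λ·h. -/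
/-!
Put J₃ = J₁J₂. For a compatible metric b each Jᵢ is b-skew-adjoint, so b(x, Jᵢx) = 0, and
all pairings within the frame x, J₁x, J₂x, J₃x reduce to these. If g(x, x) ≠ 0, the frame is
g-orthogonal with norms ±g(x, x), hence a basis of V. A compatible form b with b(x, x) = 0 then
kills x, and by skewness also each Jᵢx, so b = 0. Apply this to g - (g(x, x) / h(x, x)) h, and
to h itself to see that h(x, x) ≠ 0.
-/

open LinearMap (BilinForm IsSkewAdjoint)

namespace LinearMap.BilinForm

variable {K V : Type*} [Field K] [NeZero (2 : K)] [AddCommGroup V] [Module K V]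

theorem IsSymm.apply_map_self_eq_zero {b : BilinForm K V} (hb : b.IsSymm) {J : V → V}
    (hJ : IsSkewAdjoint b J) (x : V) : b x (J x) = 0 := by
  have h := hJ x x
  rw [Pi.neg_apply, map_neg, hb.eq] at h
  have h2 : (2 : K) * b x (J x) = 0 := by linear_combination h
  exact (mul_eq_zero.mp h2).resolve_left two_ne_zero

end LinearMap.BilinForm

namespace ParaHypercomplex

variable {K V : Type*} [Field K] [AddCommGroup V] [Module K V] {J₁ J₂ : V →ₗ[K] V}

-- `J₃` is encoded as `J₁ ∘ₗ J₂`; `J₃ ∘ₗ J₃ = id` then follows.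
structure IsParaHypercomplex (J₁ J₂ : V →ₗ[K] V) : Prop where
  sq_J₁ : J₁ ∘ₗ J₁ = -LinearMap.id
  sq_J₂ : J₂ ∘ₗ J₂ = LinearMap.id
  anticomm : J₂ ∘ₗ J₁ = -(J₁ ∘ₗ J₂)

-- Compatibility with `J₃ = J₁ ∘ₗ J₂` follows from that with `J₁` and `J₂`.
structure IsCompatible (J₁ J₂ : V →ₗ[K] V) (b : BilinForm K V) : Prop where
  isSymm : b.IsSymm
  map_J₁ : ∀ x y, b (J₁ x) (J₁ y) = b x y
  map_J₂ : ∀ x y, b (J₂ x) (J₂ y) = -b x y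

def frame (J₁ J₂ : V →ₗ[K] V) (x : V) : Fin 4 → V := ![x, J₁ x, J₂ x, (J₁ ∘ₗ J₂) x]

namespace IsCompatible

variable {b b' : BilinForm K V}

theorem sub_smul (hb : IsCompatible J₁ J₂ b) (hb' : IsCompatible J₁ J₂ b') (c : K) :
    IsCompatible J₁ J₂ (b - c • b') where
  isSymm := hb.isSymm.sub (hb'.isSymm.smul c)
  map_J₁ x y := by simp [hb.map_J₁, hb'.map_J₁]
  map_J₂ x y := by simp [hb.map_J₂, hb'.map_J₂]; ring

theorem isSkewAdjoint_J₁ (hb : IsCompatible J₁ J₂ b) (hJ₁ : J₁ ∘ₗ J₁ = -LinearMap.id) :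
    IsSkewAdjoint b J₁ := fun x y => by
  have h := hb.map_J₁ x (J₁ y)
  rw [← LinearMap.comp_apply J₁ J₁, hJ₁] at h
  simp only [LinearMap.neg_apply, LinearMap.id_apply, map_neg] at h
  simp [← h]

theorem isSkewAdjoint_J₂ (hb : IsCompatible J₁ J₂ b) (hJ₂ : J₂ ∘ₗ J₂ = LinearMap.id) :
    IsSkewAdjoint b J₂ := fun x y => by
  have h := hb.map_J₂ x (J₂ y)
  rw [← LinearMap.comp_apply J₂ J₂, hJ₂, LinearMap.id_apply] at h
  simp [h]

theorem isSkewAdjoint_J₃ (hb : IsCompatible J₁ J₂ b) (hJ : IsParaHypercomplex J₁ J₂) :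
    IsSkewAdjoint b (J₁ ∘ₗ J₂) := fun x y => by
  have hanti := LinearMap.congr_fun hJ.anticomm y
  simp only [LinearMap.comp_apply, LinearMap.neg_apply] at hanti
  simp only [LinearMap.comp_apply, Pi.neg_apply, hb.isSkewAdjoint_J₁ hJ.sq_J₁ _ _,
    hb.isSkewAdjoint_J₂ hJ.sq_J₂ _ _, hanti, map_neg, neg_neg]

variable [NeZero (2 : K)]

theorem iIsOrtho_frame (hb : IsCompatible J₁ J₂ b) (hJ : IsParaHypercomplex J₁ J₂) (x : V) :
    b.iIsOrtho (frame J₁ J₂ x) := by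
  have h01 := hb.isSymm.apply_map_self_eq_zero (hb.isSkewAdjoint_J₁ hJ.sq_J₁) x
  have h02 := hb.isSymm.apply_map_self_eq_zero (hb.isSkewAdjoint_J₂ hJ.sq_J₂) x
  have h03 := hb.isSymm.apply_map_self_eq_zero (hb.isSkewAdjoint_J₃ hJ) x
  have h12 : b (J₁ x) (J₂ x) = 0 := by
    rw [hb.isSkewAdjoint_J₁ hJ.sq_J₁]
    simpa using h03
  have h13 : b (J₁ x) ((J₁ ∘ₗ J₂) x) = 0 := by rw [LinearMap.comp_apply, hb.map_J₁, h02]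
  have h23 := hb.isSymm.apply_map_self_eq_zero (hb.isSkewAdjoint_J₁ hJ.sq_J₁) (J₂ x)
  intro i j hij
  fin_cases i <;> fin_cases j <;> simp only [frame, Function.onFun] at hij ⊢ <;>
    first | exact (hij rfl).elim | assumption | (rw [hb.isSymm.eq]; assumption)

theorem linearIndependent_frame (hb : IsCompatible J₁ J₂ b) (hJ : IsParaHypercomplex J₁ J₂)
    {x : V} (hx : b x x ≠ 0) : LinearIndependent K (frame J₁ J₂ x) := by
  refine LinearMap.BilinForm.linearIndependent_of_iIsOrtho (hb.iIsOrtho_frame hJ x) fun i => ?_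
  fin_cases i <;> simp [frame, hb.map_J₁, hb.map_J₂, hx]

theorem eq_zero_of_span_frame (hb : IsCompatible J₁ J₂ b) (hJ : IsParaHypercomplex J₁ J₂)
    {x : V} (hspan : Submodule.span K (Set.range (frame J₁ J₂ x)) = ⊤) (hx : b x x = 0) :
    b = 0 := by
  have hbx : b x = 0 := LinearMap.ext_on_range hspan fun i => by
    fin_cases i
    · exact hx
    · exact hb.isSymm.apply_map_self_eq_zero (hb.isSkewAdjoint_J₁ hJ.sq_J₁) x
    · exact hb.isSymm.apply_map_self_eq_zero (hb.isSkewAdjoint_J₂ hJ.sq_J₂) x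
    · exact hb.isSymm.apply_map_self_eq_zero (hb.isSkewAdjoint_J₃ hJ) x
  refine LinearMap.ext_on_range hspan fun i => LinearMap.ext fun y => ?_
  fin_cases i
  · simp [frame, hbx]
  · simp [frame, hb.isSkewAdjoint_J₁ hJ.sq_J₁ x y, hbx]
  · simp [frame, hb.isSkewAdjoint_J₂ hJ.sq_J₂ x y, hbx]
  · simpa [frame, hbx] using hb.isSkewAdjoint_J₃ hJ x y

theorem eq_smul_of_span_frame (hb : IsCompatible J₁ J₂ b) (hb' : IsCompatible J₁ J₂ b')
    (hJ : IsParaHypercomplex J₁ J₂) {x : V}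
    (hspan : Submodule.span K (Set.range (frame J₁ J₂ x)) = ⊤) (hx : b' x x ≠ 0) :
    b = (b x x / b' x x) • b' :=
  sub_eq_zero.mp <| (hb.sub_smul hb' _).eq_zero_of_span_frame hJ hspan <| by simp [hx]

end IsCompatible

end ParaHypercomplex

theorem stmt_9_general (V : Type*) [AddCommGroup V] [Module ℝ V]
    [FiniteDimensional ℝ V] (hdim : Module.finrank ℝ V = 4)
    (J1 J2 J3 : V →ₗ[ℝ] V)
    (hJ1 : J1 ∘ₗ J1 = -LinearMap.id)
    (hJ2 : J2 ∘ₗ J2 = LinearMap.id)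
    (h12 : J1 ∘ₗ J2 = J3)
    (h21 : J2 ∘ₗ J1 = -J3)
    (g h : V →ₗ[ℝ] V →ₗ[ℝ] ℝ)
    (gsymm : ∀ x y, g x y = g y x)
    (gnd : ∀ x, (∀ y, g x y = 0) → x = 0)
    (gJ1 : ∀ x y, g (J1 x) (J1 y) = g x y)
    (gJ2 : ∀ x y, g (J2 x) (J2 y) = -g x y)
    (hsymm : ∀ x y, h x y = h y x)
    (hnd : ∀ x, (∀ y, h x y = 0) → x = 0)
    (hJ1' : ∀ x y, h (J1 x) (J1 y) = h x y)
    (hJ2' : ∀ x y, h (J2 x) (J2 y) = -h x y)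
    :
    ∃ lam : ℝ, lam ≠ 0 ∧ ∀ X Y, g X Y = lam * h X Y := by
  subst h12
  have hJ : ParaHypercomplex.IsParaHypercomplex J1 J2 := ⟨hJ1, hJ2, h21⟩
  have hg : ParaHypercomplex.IsCompatible J1 J2 g := ⟨⟨gsymm⟩, gJ1, gJ2⟩
  have hh : ParaHypercomplex.IsCompatible J1 J2 h := ⟨⟨hsymm⟩, hJ1', hJ2'⟩
  have : Nontrivial V := Module.nontrivial_of_finrank_eq_succ hdim
  obtain ⟨x, hx⟩ := LinearMap.BilinForm.exists_bilinForm_self_ne_zero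
    (LinearMap.SeparatingLeft.ne_zero gnd) (LinearMap.BilinForm.isSymm_iff.mp hg.isSymm)
  have hspan := (hg.linearIndependent_frame hJ hx).span_eq_top_of_card_eq_finrank
    (by simp [hdim])
  have hhx : h x x ≠ 0 := fun hhx =>
    LinearMap.SeparatingLeft.ne_zero hnd (hh.eq_zero_of_span_frame hJ hspan hhx)
  exact ⟨g x x / h x x, div_ne_zero hx hhx,
    LinearMap.congr_fun₂ (hg.eq_smul_of_span_frame hh hJ hspan hhx)⟩

theorem stmt_9 (V : Type*) [AddCommGroup V] [Module ℝ V]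
    [FiniteDimensional ℝ V] (hdim : Module.finrank ℝ V = 4)
    (J1 J2 J3 : V →ₗ[ℝ] V)
    (hJ1 : J1 ∘ₗ J1 = -LinearMap.id)
    (hJ2 : J2 ∘ₗ J2 = LinearMap.id)
    (hJ3 : J3 ∘ₗ J3 = LinearMap.id)
    (h12 : J1 ∘ₗ J2 = J3)
    (h21 : J2 ∘ₗ J1 = -J3)
    (g h : V →ₗ[ℝ] V →ₗ[ℝ] ℝ)
    (gsymm : ∀ x y, g x y = g y x)
    (gnd : ∀ x, (∀ y, g x y = 0) → x = 0)
    (gJ1 : ∀ x y, g (J1 x) (J1 y) = g x y)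
    (gJ2 : ∀ x y, g (J2 x) (J2 y) = -g x y)
    (gJ3 : ∀ x y, g (J3 x) (J3 y) = -g x y)
    (hsymm : ∀ x y, h x y = h y x)
    (hnd : ∀ x, (∀ y, h x y = 0) → x = 0)
    (hJ1' : ∀ x y, h (J1 x) (J1 y) = h x y)
    (hJ2' : ∀ x y, h (J2 x) (J2 y) = -h x y)
    (hJ3' : ∀ x y, h (J3 x) (J3 y) = -h x y)
    :
    ∃ lam : ℝ, lam ≠ 0 ∧ ∀ X Y, g X Y = lam * h X Y :=
  stmt_9_general V hdim J1 J2 J3 hJ1 hJ2 h12 h21 g h gsymm gnd gJ1 gJ2 hsymm hnd hJ1' hJ2'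
end
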